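/- arXiv:2109.07551 — 2 statements merged into one kernel-verified Lean document; each statement's English description precedes it below -/
import Mathlib

section
/- Let η, ζ, δ, ε, k, l, m be real numbers with ζ ≠ 0, η ≠ ζ, η ≠ −ζ, and ζ·η·(k+m) + l·(η² − ζ²) ≠ 0. Define H₁(x,y) = −ζ·x + η·y and H₂(x,y) = −ε·x + δ·y + l·x·y − (m/2)·x² + (k/2)·y². Then the set of unordered pairs {u, v} of points u, v ∈ ℝ² with u ≠ v, ‖u‖ = ‖v‖ = 1, H₁(u) = H₁(v) and H₂(u) = H₂(v) has at most one element. -/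
/-- Theorem A (algebraic core, constant–affine case): with `H₁(x,y) = -ζx + ηy` and
`H₂(x,y) = -εx + δy + lxy - (m/2)x² + (k/2)y²`, under the stated nondegeneracy conditions,
the set of unordered pairs `{u, v}` of distinct unit-circle points with `H₁ u = H₁ v` and
`H₂ u = H₂ v` has at most one element. -/
theorem closing_pairs_at_most_one (η ζ δ ε k l m : ℝ)
    (hζ : ζ ≠ 0) (hηζ : η ≠ ζ) (hηζ' : η ≠ -ζ)
    (hl : ζ * η * (k + m) + l * (η ^ 2 - ζ ^ 2) ≠ 0)
    (H₁ H₂ : ℝ × ℝ → ℝ)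
    (hH₁ : ∀ p : ℝ × ℝ, H₁ p = -ζ * p.1 + η * p.2)
    (hH₂ : ∀ p : ℝ × ℝ,
      H₂ p = -ε * p.1 + δ * p.2 + l * p.1 * p.2 - (m / 2) * p.1 ^ 2 + (k / 2) * p.2 ^ 2) :
    {s : Set (ℝ × ℝ) | ∃ u v : ℝ × ℝ, u ≠ v ∧ u.1 ^ 2 + u.2 ^ 2 = 1 ∧ v.1 ^ 2 + v.2 ^ 2 = 1 ∧
      H₁ u = H₁ v ∧ H₂ u = H₂ v ∧ s = {u, v}}.Subsingleton := by
  set D : ℝ := ζ * η * (k + m) + l * (η ^ 2 - ζ ^ 2) with hD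
  have key : ∀ u v : ℝ × ℝ, u ≠ v → u.1 ^ 2 + u.2 ^ 2 = 1 → v.1 ^ 2 + v.2 ^ 2 = 1 →
      H₁ u = H₁ v → H₂ u = H₂ v →
      ζ * (u.1 - v.1) = η * (u.2 - v.2) ∧
      D * (u.1 + v.1) = 2 * ζ * (δ * ζ - ε * η) ∧
      D * (u.2 + v.2) = -2 * η * (δ * ζ - ε * η) ∧
      (η ^ 2 + ζ ^ 2) * (u.2 - v.2) ^ 2 =
        ζ ^ 2 * (4 - (u.1 + v.1) ^ 2 - (u.2 + v.2) ^ 2) := by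
    intro u v huv hu hv h1 h2
    rw [hH₁ u, hH₁ v] at h1
    rw [hH₂ u, hH₂ v] at h2
    have hA : ζ * (u.1 - v.1) = η * (u.2 - v.2) := by linear_combination -h1
    have hd2 : u.2 - v.2 ≠ 0 := by
      intro h
      have h1' : u.1 - v.1 = 0 := by
        have := hA
        rw [h] at this
        simpa [hζ, sub_eq_zero, mul_eq_zero] using this
      exact huv (Prod.ext (by linarith [sub_eq_zero.mp h1']) (by linarith [sub_eq_zero.mp h]))
    -- orthogonality of sum and (η, ζ)
    have h3' : (u.2 - v.2) * (η * (u.1 + v.1) + ζ * (u.2 + v.2)) = 0 := by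
      linear_combination ζ * hu - ζ * hv - (u.1 + v.1) * hA
    have h3 : η * (u.1 + v.1) + ζ * (u.2 + v.2) = 0 :=
      (mul_eq_zero.mp h3').resolve_left hd2
    -- H₂ closing equation
    have h4 : (u.2 - v.2) * (-2*ε*η + 2*δ*ζ + l*(ζ*(u.1+v.1) + η*(u.2+v.2))
        - m*η*(u.1+v.1) + k*ζ*(u.2+v.2)) = 0 := by
      linear_combination 2 * ζ * h2 + (2*ε - l*(u.2+v.2) + m*(u.1+v.1)) * hA
    have h5 : -2*ε*η + 2*δ*ζ + l*(ζ*(u.1+v.1) + η*(u.2+v.2))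
        - m*η*(u.1+v.1) + k*ζ*(u.2+v.2) = 0 :=
      (mul_eq_zero.mp h4).resolve_left hd2
    have hp : D * (u.1 + v.1) = 2 * ζ * (δ * ζ - ε * η) := by
      have hz : ζ * (D * (u.1 + v.1)) = ζ * (2 * ζ * (δ * ζ - ε * η)) := by
        linear_combination (-ζ^2) * h5 + (l*η*ζ + k*ζ^2) * h3
      exact mul_left_cancel₀ hζ hz
    have hq : D * (u.2 + v.2) = -2 * η * (δ * ζ - ε * η) := by
      have hz : ζ * (D * (u.2 + v.2)) = ζ * (-2 * η * (δ * ζ - ε * η)) := by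
        linear_combination D * h3 - η * hp
      exact mul_left_cancel₀ hζ hz
    refine ⟨hA, hp, hq, ?_⟩
    linear_combination (2*ζ^2) * hu + (2*ζ^2) * hv - (ζ*(u.1-v.1) + η*(u.2-v.2)) * hA
  -- main argument
  rintro s₁ ⟨u, v, huv, hu, hv, h1, h2, rfl⟩ s₂ ⟨u', v', huv', hu', hv', h1', h2', rfl⟩
  obtain ⟨hA, hp, hq, hT⟩ := key u v huv hu hv h1 h2
  obtain ⟨hA', hp', hq', hT'⟩ := key u' v' huv' hu' hv' h1' h2'
  have hpp : u'.1 + v'.1 = u.1 + v.1 := mul_left_cancel₀ hl (hp'.trans hp.symm)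
  have hqq : u'.2 + v'.2 = u.2 + v.2 := mul_left_cancel₀ hl (hq'.trans hq.symm)
  have hsq : (u'.2 - v'.2) ^ 2 = (u.2 - v.2) ^ 2 := by
    have hne : (η : ℝ) ^ 2 + ζ ^ 2 ≠ 0 := by positivity
    apply mul_left_cancel₀ hne
    rw [hT, hT', hpp, hqq]
  have hcase : (u'.2 - v'.2) - (u.2 - v.2) = 0 ∨ (u'.2 - v'.2) + (u.2 - v.2) = 0 := by
    rcases mul_eq_zero.mp (show ((u'.2 - v'.2) - (u.2 - v.2)) * ((u'.2 - v'.2) + (u.2 - v.2)) = 0 by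
      linear_combination hsq) with h | h
    · exact Or.inl h
    · exact Or.inr h
  rcases hcase with h | h
  · -- same orientation: u' = u, v' = v
    have hd2 : u'.2 - v'.2 = u.2 - v.2 := by linarith
    have hd1 : u'.1 - v'.1 = u.1 - v.1 := by
      apply mul_left_cancel₀ hζ
      linear_combination hA' - hA + η * h
    have e1 : u' = u := Prod.ext (by linarith) (by linarith)
    have e2 : v' = v := Prod.ext (by linarith) (by linarith)
    rw [e1, e2]
  · -- swapped: u' = v, v' = u
    have hd2 : u'.2 - v'.2 = -(u.2 - v.2) := by linarith
    have hd1 : u'.1 - v'.1 = -(u.1 - v.1) := by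
      apply mul_left_cancel₀ hζ
      linear_combination hA' + hA + η * h
    have e1 : u' = v := Prod.ext (by linarith) (by linarith)
    have e2 : v' = u := Prod.ext (by linarith) (by linarith)
    rw [e1, e2, Set.pair_comm]
end

section
/- The set of (p,q,r,s) ∈ ℝ⁴ satisfying p + 2q = r + 2s, p + 2q + 2p² − pq + q² = r + 2s + 2r² − rs + s², p² + q² = 1, r² + s² = 1 and (p,q) ≠ (r,s) is exactly { (−2/√5, 1/√5, 2/√5, −1/√5), (2/√5, −1/√5, −2/√5, 1/√5) }. Moreover, with X(x,y) = (2,−1) and Y(x,y) = (2 − x + 2y, −1 − 4x + y), both points (−2/√5, 1/√5) and (2/√5, −1/√5) satisfy the crossing condition ⟨X(u), u⟩ · ⟨Y(u), u⟩ > 0. -/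
/-- The closing-equation system for `X = (2,-1)`, `Y = (2 - x + 2y, -1 - 4x + y)`. -/
def closingSys6 (p q r s : ℝ) : Prop :=
  p + 2 * q = r + 2 * s ∧
    p + 2 * q + 2 * p ^ 2 - p * q + q ^ 2 = r + 2 * s + 2 * r ^ 2 - r * s + s ^ 2 ∧
    p ^ 2 + q ^ 2 = 1 ∧ r ^ 2 + s ^ 2 = 1 ∧ (p, q) ≠ (r, s)

/-- The inner vector field `X(x,y) = (2, -1)`. -/
def X6 (_ : ℝ × ℝ) : ℝ × ℝ := (2, -1)

/-- The outer vector field `Y(x,y) = (2 - x + 2y, -1 - 4x + y)`. -/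
def Y6 (u : ℝ × ℝ) : ℝ × ℝ := (2 - u.1 + 2 * u.2, -1 - 4 * u.1 + u.2)

/-- The dot product `⟨X(u), u⟩ ⬝ ⟨Y(u), u⟩` crossing condition at `u`. -/
def crossing6 (u : ℝ × ℝ) : Prop :=
  ((X6 u).1 * u.1 + (X6 u).2 * u.2) * ((Y6 u).1 * u.1 + (Y6 u).2 * u.2) > 0

/-!
Since `H₁(p, q) = H₁(r, s)` gives `p - r = 2 (s - q)`, the differences of the two circle
equations and of the two `H₂` equations both factor through `q - s`, which is nonzero for distinct
points. The remaining two linear equations force `(p, q, r, s) = (2s, -s, -2s, s)` with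
`5 s² = 1`. On the line `u = (2t, -t)` the crossing product equals `5t² (t + 5)`.
-/

theorem closingSys6_iff (p q r s : ℝ) :
    closingSys6 p q r s ↔ p = 2 * s ∧ q = -s ∧ r = -2 * s ∧ 5 * s ^ 2 = 1 := by
  constructor
  · rintro ⟨hH₁, hH₂, hpq, hrs, hne⟩
    have hqs : q - s ≠ 0 := by
      refine sub_ne_zero.mpr fun h => hne ?_
      rw [h, show p = r by linarith [hH₁]]
    have h₁ : 5 * q - 3 * s - 4 * r = 0 := by
      refine (mul_eq_zero.mp ?_).resolve_left hqs
      linear_combination hpq - hrs - (p + r + 2 * s - 2 * q) * hH₁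
    have h₂ : 6 * q - 4 * s - 5 * r = 0 := by
      refine (mul_eq_zero.mp ?_).resolve_left hqs
      linear_combination hH₂ - hH₁ - hpq + hrs - (p + r + 2 * s - 3 * q) * hH₁
    have hq : q = -s := by linarith
    have hr : r = -2 * s := by linarith
    have hp : p = 2 * s := by linarith
    subst hp hq hr
    exact ⟨rfl, rfl, rfl, by linear_combination hrs⟩
  · rintro ⟨rfl, rfl, rfl, hs⟩
    refine ⟨by ring, by ring, by linear_combination hs, by linear_combination hs, fun h => ?_⟩
    have hs0 : s = 0 := by linarith [congrArg Prod.fst h]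
    norm_num [hs0] at hs

theorem five_mul_sq_eq_one_iff (s : ℝ) :
    5 * s ^ 2 = 1 ↔ s = 1 / √5 ∨ s = -1 / √5 := by
  have h : 5 * s ^ 2 = 1 ↔ s ^ 2 = (1 / √5) ^ 2 := by
    rw [div_pow, Real.sq_sqrt (by norm_num : (0:ℝ) ≤ 5)]
    constructor <;> intro h <;> linarith
  rw [h, sq_eq_sq_iff_eq_or_eq_neg, neg_div]

theorem crossing6_two_mul_neg_iff (t : ℝ) : crossing6 (2 * t, -t) ↔ t ≠ 0 ∧ -5 < t := by
  have key : crossing6 (2 * t, -t) ↔ 0 < 5 * t ^ 2 * (t + 5) := by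
    unfold crossing6 X6 Y6
    constructor <;> intro h <;> linarith
  rw [key]
  constructor
  · intro h
    refine ⟨fun ht => by simp [ht] at h, ?_⟩
    nlinarith [sq_nonneg t]
  · rintro ⟨ht0, ht⟩
    have : 0 < t ^ 2 := by positivity
    nlinarith

/-- The solution set of the closing equations is exactly the two listed points, and both
unit-circle intersection points satisfy the crossing condition. -/
theorem closingSys6_solutions_and_crossing :
    {x : ℝ × ℝ × ℝ × ℝ | closingSys6 x.1 x.2.1 x.2.2.1 x.2.2.2} =
      {(-2 / Real.sqrt 5, 1 / Real.sqrt 5, 2 / Real.sqrt 5, -1 / Real.sqrt 5),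
       (2 / Real.sqrt 5, -1 / Real.sqrt 5, -2 / Real.sqrt 5, 1 / Real.sqrt 5)} ∧
    crossing6 (-2 / Real.sqrt 5, 1 / Real.sqrt 5) ∧
    crossing6 (2 / Real.sqrt 5, -1 / Real.sqrt 5) := by
  have ht : 0 < 1 / √5 := by positivity
  have ht5 : 1 / √5 < 5 := by
    rw [div_lt_iff₀ (by positivity)]
    nlinarith [Real.sq_sqrt (by norm_num : (0:ℝ) ≤ 5), Real.sqrt_nonneg 5]
  refine ⟨?_, ?_, ?_⟩
  · ext ⟨p, q, r, s⟩
    simp only [Set.mem_ofPred_eq, closingSys6_iff, five_mul_sq_eq_one_iff, Set.mem_insert_iff,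
      Set.mem_singleton_iff, Prod.mk.injEq]
    constructor
    · rintro ⟨rfl, rfl, rfl, rfl | rfl⟩
      · exact .inr ⟨by ring, by ring, by ring, rfl⟩
      · exact .inl ⟨by ring, by ring, by ring, rfl⟩
    · rintro (⟨rfl, rfl, rfl, rfl⟩ | ⟨rfl, rfl, rfl, rfl⟩)
      · exact ⟨by ring, by ring, by ring, .inr rfl⟩
      · exact ⟨by ring, by ring, by ring, .inl rfl⟩
  · convert (crossing6_two_mul_neg_iff (-1 / √5)).mpr ⟨by positivity, by rw [neg_div]; linarith⟩
      using 2 <;> ring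
  · convert (crossing6_two_mul_neg_iff (1 / √5)).mpr ⟨ht.ne', by linarith⟩ using 2 <;> ring
end
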